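/- If a propositional formula φ entails a propositional formula ψ, then there exists a propositional formula χ such that φ entails χ, χ entails ψ, and every propositional variable occurring in χ occurs both in φ and in ψ. -/

import Mathlib

inductive PropForm : Type where
  | var : ℕ → PropForm
  | tru : PropForm
  | fls : PropForm
  | neg : PropForm → PropForm
  | conj : PropForm → PropForm → PropForm
  | disj : PropForm → PropForm → PropForm
deriving DecidableEq

namespace PropForm

def eval (v : ℕ → Bool) : PropForm → Bool
  | var p => v p
  | tru => true
  | fls => false
  | neg φ => !(eval v φ)
  | conj φ ψ => eval v φ && eval v ψ
  | disj φ ψ => eval v φ || eval v ψ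

def sig : PropForm → Finset ℕ
  | var p => {p}
  | tru => ∅
  | fls => ∅
  | neg φ => sig φ
  | conj φ ψ => sig φ ∪ sig ψ
  | disj φ ψ => sig φ ∪ sig ψ

def impl (φ ψ : PropForm) : PropForm := disj (neg φ) ψ

def iff (φ ψ : PropForm) : PropForm := conj (impl φ ψ) (impl ψ φ)

end PropForm

/-- Semantic entailment: every model of `φ` is a model of `ψ`. -/
def Entails (φ ψ : PropForm) : Prop :=
  ∀ v : ℕ → Bool, φ.eval v = true → ψ.eval v = true

/-!
A variable `p` that does not occur in `ψ` can be existentially quantified away from `φ`: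
the formula `φ[⊤/p] ∨ φ[⊥/p]` is entailed by `φ`, no longer mentions `p`, and still
entails `ψ`, because the truth value of `ψ` does not depend on `p`. Quantifying away, one
at a time, the variables of `φ` that do not occur in `ψ` leaves an interpolant.
-/

namespace PropForm

def subst (p : ℕ) (b : Bool) : PropForm → PropForm
  | var q => if q = p then (if b then tru else fls) else var q
  | tru => tru
  | fls => fls
  | neg φ => neg (subst p b φ)
  | conj φ ψ => conj (subst p b φ) (subst p b ψ)
  | disj φ ψ => disj (subst p b φ) (subst p b ψ)

theorem eval_subst (v : ℕ → Bool) (p : ℕ) (b : Bool) (φ : PropForm) :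
    (φ.subst p b).eval v = φ.eval (Function.update v p b) := by
  induction φ with
  | var q =>
    by_cases hq : q = p
    · subst hq
      cases b <;> simp [subst, eval]
    · simp [subst, eval, hq]
  | tru | fls => rfl
  | neg φ ih => simp [subst, eval, ih]
  | conj φ ψ ih₁ ih₂ | disj φ ψ ih₁ ih₂ => simp [subst, eval, ih₁, ih₂]

theorem sig_subst_subset (p : ℕ) (b : Bool) (φ : PropForm) :
    (φ.subst p b).sig ⊆ φ.sig.erase p := by
  induction φ with
  | var q =>
    by_cases hq : q = p
    · cases b <;> simp [subst, sig, hq]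
    · simp [subst, sig, hq]
  | tru | fls => simp [subst, sig]
  | neg φ ih => exact ih
  | conj φ ψ ih₁ ih₂ | disj φ ψ ih₁ ih₂ =>
    simp only [subst, sig, Finset.erase_union_distrib]
    exact Finset.union_subset_union ih₁ ih₂

theorem eval_congr {v w : ℕ → Bool} (φ : PropForm) (h : ∀ q ∈ φ.sig, v q = w q) :
    φ.eval v = φ.eval w := by
  induction φ with
  | var q => exact h q (by simp [sig])
  | tru | fls => rfl
  | neg φ ih => simp [eval, ih h]
  | conj φ ψ ih₁ ih₂ | disj φ ψ ih₁ ih₂ =>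
    simp only [eval]
    rw [ih₁ fun q hq => h q (by simp [sig, hq]), ih₂ fun q hq => h q (by simp [sig, hq])]

theorem eval_update_of_notMem {p : ℕ} {φ : PropForm} (hp : p ∉ φ.sig) (v : ℕ → Bool)
    (b : Bool) :
    φ.eval (Function.update v p b) = φ.eval v :=
  φ.eval_congr fun _ hq => Function.update_of_ne (ne_of_mem_of_not_mem hq hp) b v

/-- The existential quantification `∃ p, φ`, written as `φ[⊤/p] ∨ φ[⊥/p]`. -/
def forget (p : ℕ) (φ : PropForm) : PropForm := disj (φ.subst p true) (φ.subst p false)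

theorem eval_forget (v : ℕ → Bool) (p : ℕ) (φ : PropForm) :
    (φ.forget p).eval v =
      (φ.eval (Function.update v p true) || φ.eval (Function.update v p false)) := by
  simp only [forget, eval, eval_subst]

theorem sig_forget_subset (p : ℕ) (φ : PropForm) : (φ.forget p).sig ⊆ φ.sig.erase p :=
  Finset.union_subset (sig_subst_subset p true φ) (sig_subst_subset p false φ)

end PropForm

open PropForm

theorem entails_forget (p : ℕ) (φ : PropForm) : Entails φ (φ.forget p) := by
  intro v hv
  rw [eval_forget]
  cases hb : v p <;> simp [← hb, hv]

theorem forget_entails {φ ψ : PropForm} {p : ℕ} (h : Entails φ ψ) (hp : p ∉ ψ.sig) :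
    Entails (φ.forget p) ψ := by
  intro v hv
  rw [eval_forget, Bool.or_eq_true] at hv
  rcases hv with hv | hv <;> simpa [eval_update_of_notMem hp] using h _ hv

theorem exists_interpolant_sig_subset_sdiff {φ ψ : PropForm} (h : Entails φ ψ) (s : Finset ℕ)
    (hs : Disjoint s ψ.sig) :
    ∃ χ : PropForm, Entails φ χ ∧ Entails χ ψ ∧ χ.sig ⊆ φ.sig \ s := by
  induction s using Finset.induction_on generalizing φ with
  | empty => exact ⟨φ, fun _ => id, h, by simp⟩
  | insert p s _ ih =>
    have hp : p ∉ ψ.sig := Finset.disjoint_left.mp hs (Finset.mem_insert_self p s)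
    obtain ⟨χ, hφχ, hχψ, hχ⟩ :=
      ih (forget_entails h hp) (Finset.disjoint_of_subset_left (Finset.subset_insert p s) hs)
    refine ⟨χ, fun v hv => hφχ v (entails_forget p φ v hv), hχψ, ?_⟩
    calc χ.sig ⊆ (φ.forget p).sig \ s := hχ
      _ ⊆ φ.sig.erase p \ s := Finset.sdiff_subset_sdiff (sig_forget_subset p φ) le_rfl
      _ = φ.sig \ insert p s := by rw [Finset.erase_sdiff_comm, Finset.sdiff_insert]

/-- Craig Interpolation Property for classical propositional logic. -/
theorem craig_interpolation (φ ψ : PropForm) (h : Entails φ ψ) :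
    ∃ χ : PropForm, Entails φ χ ∧ Entails χ ψ ∧ χ.sig ⊆ φ.sig ∩ ψ.sig := by
  obtain ⟨χ, hφχ, hχψ, hχ⟩ :=
    exists_interpolant_sig_subset_sdiff h (φ.sig \ ψ.sig) Finset.sdiff_disjoint
  exact ⟨χ, hφχ, hχψ, Finset.sdiff_sdiff_self_left φ.sig ψ.sig ▸ hχ⟩
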